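/- Let a > 0 and b > 0. Then the function x ↦ g''(a·f(x))/x² is integrable on (0,b). -/

import Mathlib

open Real Set MeasureTheory

/-- `g(t) = arccos(1/t) / √(1 − 1/t²)`. -/
noncomputable def gFun (t : ℝ) : ℝ := Real.arccos (1/t) / Real.sqrt (1 - 1/t^2)

/-- The function `y ↦ π/(√(y²−1) − arccos(1/y))`, a strictly decreasing bijection
from `(1,∞)` onto `(0,∞)`. -/
noncomputable def sigmaF (y : ℝ) : ℝ :=
  Real.pi / (Real.sqrt (y^2 - 1) - Real.arccos (1/y))

/-! For `t > 1` put `θ = arccos (1/t) ∈ (0, π/2)`, so that `g t = θ / sin θ` and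
`g'' t = cos³θ · (3θ cos θ − 3 sin θ + sin³θ) / sin⁵θ`. The numerator vanishes to fifth order at
`θ = 0` (its derivative is `3 sin θ (sin θ cos θ − θ) = O(θ⁴)`), and `θ ≤ (π/2) sin θ`, whence
`|g'' t| ≤ 32 cos²θ = 32 / t²`; on `(0, 1)` the function `g` vanishes identically.
Since `√(y² − 1) − arccos (1/y) < y`, the relation `sigmaF (f x) = x` gives `x · f x > π`, so the
integrand is bounded by `32 / (aπ)²` off the single point where `a · f x = 1`.
It is measurable because `f` is monotone. -/

lemma sqrt_one_sub_one_div_sq {t : ℝ} (ht : 0 < t) : √(1 - 1 / t ^ 2) = √(t ^ 2 - 1) / t := by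
  rw [show 1 - 1 / t ^ 2 = (t ^ 2 - 1) / t ^ 2 by field_simp, sqrt_div' _ (sq_nonneg t),
    sqrt_sq ht.le]

lemma sin_arccos_one_div {t : ℝ} (ht : 0 < t) : sin (arccos (1 / t)) = √(t ^ 2 - 1) / t := by
  rw [sin_arccos, div_pow, one_pow, sqrt_one_sub_one_div_sq ht]

lemma cos_arccos_one_div {t : ℝ} (ht : 1 ≤ t) : cos (arccos (1 / t)) = 1 / t := by
  have ht0 : 0 < t := by linarith
  exact cos_arccos (by linarith [one_div_pos.2 ht0]) ((div_le_one ht0).2 ht)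

lemma hasDerivAt_arccos_one_div {t : ℝ} (ht : 1 < t) :
    HasDerivAt (fun y ↦ arccos (1 / y)) (1 / (t * √(t ^ 2 - 1))) t := by
  have ht0 : 0 < t := by linarith
  have h_ne_neg : 1 / t ≠ -1 := by linarith [one_div_pos.2 ht0]
  have h_ne : 1 / t ≠ 1 := ((div_lt_one ht0).2 ht).ne
  have hinv : HasDerivAt (fun y : ℝ ↦ 1 / y) (-(1 / t ^ 2)) t := by
    simpa [one_div] using hasDerivAt_inv ht0.ne'
  refine ((hasDerivAt_arccos h_ne_neg h_ne).comp t hinv).congr_deriv ?_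
  rw [div_pow, one_pow, sqrt_one_sub_one_div_sq ht0]
  field_simp

lemma hasDerivAt_sqrt_sq_sub_one {t : ℝ} (ht : 1 < t) :
    HasDerivAt (fun y ↦ √(y ^ 2 - 1)) (t / √(t ^ 2 - 1)) t := by
  have hs : 0 < √(t ^ 2 - 1) := sqrt_pos.2 (by nlinarith)
  have hq : HasDerivAt (fun y : ℝ ↦ y ^ 2 - 1) (2 * t) t := by
    simpa using (hasDerivAt_pow 2 t).sub_const 1
  refine ((hasDerivAt_sqrt (by nlinarith)).comp t hq).congr_deriv ?_
  field_simp

noncomputable def gFunDeriv (t : ℝ) : ℝ :=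
  (t ^ 2 - 1)⁻¹ - arccos (1 / t) / √(t ^ 2 - 1) ^ 3

noncomputable def gFunDeriv2 (t : ℝ) : ℝ :=
  3 * t * arccos (1 / t) / √(t ^ 2 - 1) ^ 5 - 2 * t / (t ^ 2 - 1) ^ 2 - 1 / (t * (t ^ 2 - 1) ^ 2)

lemma gFun_eq_of_pos {t : ℝ} (ht : 0 < t) : gFun t = t * arccos (1 / t) / √(t ^ 2 - 1) := by
  rw [gFun, sqrt_one_sub_one_div_sq ht, div_div_eq_mul_div, mul_comm]

lemma hasDerivAt_gFun {t : ℝ} (ht : 1 < t) : HasDerivAt gFun (gFunDeriv t) t := by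
  have ht0 : 0 < t := by linarith
  have hs2 : √(t ^ 2 - 1) ^ 2 = t ^ 2 - 1 := sq_sqrt (by nlinarith)
  have hs : 0 < √(t ^ 2 - 1) := sqrt_pos.2 (by nlinarith)
  have hd := (((hasDerivAt_id t).mul (hasDerivAt_arccos_one_div ht)).div
    (hasDerivAt_sqrt_sq_sub_one ht) hs.ne')
  refine (hd.congr_of_eventuallyEq ?_).congr_deriv ?_
  · filter_upwards [Ioi_mem_nhds ht0] with y hy using gFun_eq_of_pos hy
  · simp only [gFunDeriv, Pi.mul_apply, id]
    generalize √(t ^ 2 - 1) = s at hs hs2 ⊢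
    rw [← hs2]
    field_simp
    linear_combination arccos (1 / t) * hs2

lemma hasDerivAt_gFunDeriv {t : ℝ} (ht : 1 < t) : HasDerivAt gFunDeriv (gFunDeriv2 t) t := by
  have hpos : 0 < t ^ 2 - 1 := by nlinarith
  have hs2 : √(t ^ 2 - 1) ^ 2 = t ^ 2 - 1 := sq_sqrt hpos.le
  have hs : 0 < √(t ^ 2 - 1) := sqrt_pos.2 hpos
  have hq : HasDerivAt (fun y : ℝ ↦ y ^ 2 - 1) (2 * t) t := by
    simpa using (hasDerivAt_pow 2 t).sub_const 1
  have hd := (hq.inv hpos.ne').sub ((hasDerivAt_arccos_one_div ht).div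
    ((hasDerivAt_sqrt_sq_sub_one ht).pow 3) (pow_ne_zero 3 hs.ne'))
  refine hd.congr_deriv ?_
  simp only [gFunDeriv2, Pi.pow_apply]
  generalize √(t ^ 2 - 1) = s at hs hs2 ⊢
  rw [← hs2]
  field_simp
  ring

lemma deriv_deriv_gFun_of_one_lt {t : ℝ} (ht : 1 < t) : deriv (deriv gFun) t = gFunDeriv2 t := by
  have h : deriv gFun =ᶠ[nhds t] gFunDeriv := by
    filter_upwards [Ioi_mem_nhds ht] with y hy using (hasDerivAt_gFun hy).deriv
  rw [h.deriv_eq, (hasDerivAt_gFunDeriv ht).deriv]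

lemma gFun_eq_zero {t : ℝ} (ht0 : 0 < t) (ht1 : t < 1) : gFun t = 0 := by
  rw [gFun, arccos_eq_zero.2 ((one_le_div ht0).2 ht1.le), zero_div]

lemma deriv_deriv_gFun_of_lt_one {t : ℝ} (ht0 : 0 < t) (ht1 : t < 1) :
    deriv (deriv gFun) t = 0 := by
  have h : deriv gFun =ᶠ[nhds t] fun _ ↦ 0 := by
    filter_upwards [Ioo_mem_nhds ht0 ht1] with y hy
    have hy' : gFun =ᶠ[nhds y] fun _ ↦ 0 := by
      filter_upwards [Ioo_mem_nhds hy.1 hy.2] with z hz using gFun_eq_zero hz.1 hz.2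
    rw [hy'.deriv_eq, deriv_const]
  rw [h.deriv_eq, deriv_const]

noncomputable def gDeriv2Num (θ : ℝ) : ℝ := 3 * θ * cos θ - 3 * sin θ + sin θ ^ 3

lemma hasDerivAt_gDeriv2Num (θ : ℝ) :
    HasDerivAt gDeriv2Num (3 * sin θ * (sin θ * cos θ - θ)) θ := by
  have h := ((((hasDerivAt_id θ).const_mul 3).mul (hasDerivAt_cos θ)).sub
    ((hasDerivAt_sin θ).const_mul 3)).add ((hasDerivAt_sin θ).pow 3)
  refine h.congr_deriv ?_
  simp only [id]
  push_cast
  ring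

lemma abs_sin_mul_cos_sub_self_le (u : ℝ) : |sin u * cos u - u| ≤ |u| ^ 3 := by
  have h := abs_sub_sin_le (2 * u)
  rw [sin_two_mul, abs_mul, abs_two, abs_le] at h
  rw [abs_le]
  constructor <;> nlinarith [pow_nonneg (abs_nonneg u) 3]

lemma abs_gDeriv2Num_le {θ : ℝ} (hθ : 0 ≤ θ) : |gDeriv2Num θ| ≤ θ ^ 5 := by
  refine image_norm_le_of_norm_deriv_right_le_deriv_boundary (a := 0) (b := θ)
    (B := fun u ↦ u ^ 5) (B' := fun u ↦ 5 * u ^ 4)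
    (fun u _ ↦ (hasDerivAt_gDeriv2Num u).continuousAt.continuousWithinAt)
    (fun u _ ↦ (hasDerivAt_gDeriv2Num u).hasDerivWithinAt) (by simp [gDeriv2Num])
    (fun u ↦ by simpa using hasDerivAt_pow 5 u) (fun u hu ↦ ?_) ⟨hθ, le_rfl⟩
  have hsin : |sin u| ≤ u := abs_sin_le_abs.trans_eq (abs_of_nonneg hu.1)
  have hsc := (abs_sin_mul_cos_sub_self_le u).trans_eq (by rw [abs_of_nonneg hu.1])
  rw [norm_eq_abs, abs_mul, abs_mul, abs_of_pos three_pos]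
  calc 3 * |sin u| * |sin u * cos u - u| ≤ 3 * u * u ^ 3 :=
        mul_le_mul (by linarith) hsc (abs_nonneg _) (by linarith [hu.1])
    _ ≤ 5 * u ^ 4 := by nlinarith [pow_nonneg hu.1 4]

lemma gFunDeriv2_eq {t : ℝ} (ht : 1 < t) :
    gFunDeriv2 t = cos (arccos (1 / t)) ^ 3 * gDeriv2Num (arccos (1 / t)) /
      sin (arccos (1 / t)) ^ 5 := by
  have ht0 : 0 < t := by linarith
  have hs2 : √(t ^ 2 - 1) ^ 2 = t ^ 2 - 1 := sq_sqrt (by nlinarith)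
  have hs : 0 < √(t ^ 2 - 1) := sqrt_pos.2 (by nlinarith)
  rw [gDeriv2Num, cos_arccos_one_div ht.le, sin_arccos_one_div ht0, gFunDeriv2]
  generalize √(t ^ 2 - 1) = s at hs hs2 ⊢
  rw [← hs2]
  field_simp
  linear_combination (-s) * hs2

lemma abs_cos_pow_mul_gDeriv2Num_div_le {θ : ℝ} (h0 : 0 < θ) (h1 : θ ≤ π / 2) :
    |cos θ ^ 3 * gDeriv2Num θ / sin θ ^ 5| ≤ 32 * cos θ ^ 2 := by
  have hsin : 0 < sin θ := sin_pos_of_pos_of_lt_pi h0 (by linarith [pi_pos])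
  have hcos0 : 0 ≤ cos θ := cos_nonneg_of_neg_pi_div_two_le_of_le (by linarith [pi_pos]) h1
  have hθ : θ ≤ 2 * sin θ := by
    have := mul_le_sin h0.le h1
    rw [div_mul_eq_mul_div, div_le_iff₀ pi_pos] at this
    nlinarith [pi_le_four]
  have hcos3 : cos θ ^ 3 ≤ cos θ ^ 2 := pow_le_pow_of_le_one hcos0 (cos_le_one θ) (by norm_num)
  rw [abs_div, abs_mul, abs_of_nonneg (pow_nonneg hcos0 3), abs_of_pos (pow_pos hsin 5),
    div_le_iff₀ (pow_pos hsin 5)]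
  calc cos θ ^ 3 * |gDeriv2Num θ| ≤ cos θ ^ 2 * (2 * sin θ) ^ 5 := by
        gcongr
        exact (abs_gDeriv2Num_le h0.le).trans (by gcongr)
    _ = 32 * cos θ ^ 2 * sin θ ^ 5 := by ring

lemma abs_gFunDeriv2_le {t : ℝ} (ht : 1 < t) : |gFunDeriv2 t| ≤ 32 / t ^ 2 := by
  have ht0 : 0 < t := by linarith
  rw [gFunDeriv2_eq ht]
  refine (abs_cos_pow_mul_gDeriv2Num_div_le (arccos_pos.2 ((div_lt_one ht0).2 ht))
    (arccos_le_pi_div_two.2 (by positivity))).trans_eq ?_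
  rw [cos_arccos_one_div ht.le]
  ring

lemma abs_deriv_deriv_gFun_le {t : ℝ} (ht0 : 0 < t) (ht1 : t ≠ 1) :
    |deriv (deriv gFun) t| ≤ 32 / t ^ 2 := by
  rcases ht1.lt_or_gt with h | h
  · rw [deriv_deriv_gFun_of_lt_one ht0 h, abs_zero]
    positivity
  · rw [deriv_deriv_gFun_of_one_lt h]
    exact abs_gFunDeriv2_le h

noncomputable def sigmaDenom (y : ℝ) : ℝ := √(y ^ 2 - 1) - arccos (1 / y)

lemma sigmaF_eq_pi_div (y : ℝ) : sigmaF y = π / sigmaDenom y := rfl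

lemma hasDerivAt_sigmaDenom {y : ℝ} (hy : 1 < y) :
    HasDerivAt sigmaDenom (√(y ^ 2 - 1) / y) y := by
  have hs2 : √(y ^ 2 - 1) ^ 2 = y ^ 2 - 1 := sq_sqrt (by nlinarith)
  have hs : 0 < √(y ^ 2 - 1) := sqrt_pos.2 (by nlinarith)
  refine ((hasDerivAt_sqrt_sq_sub_one hy).sub (hasDerivAt_arccos_one_div hy)).congr_deriv ?_
  generalize √(y ^ 2 - 1) = s at hs hs2 ⊢
  field_simp
  linear_combination -hs2

lemma strictMonoOn_sigmaDenom : StrictMonoOn sigmaDenom (Ioi 1) := by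
  refine strictMonoOn_of_deriv_pos (convex_Ioi 1)
    (fun y hy ↦ (hasDerivAt_sigmaDenom hy).continuousAt.continuousWithinAt) fun y hy ↦ ?_
  rw [interior_Ioi] at hy
  rw [(hasDerivAt_sigmaDenom hy).deriv]
  exact div_pos (sqrt_pos.2 (by nlinarith [mem_Ioi.1 hy])) (by linarith [mem_Ioi.1 hy])

lemma sigmaDenom_lt_self {y : ℝ} (hy : 0 < y) : sigmaDenom y < y := by
  have hs : √(y ^ 2 - 1) < y := (sqrt_lt' hy).2 (by linarith)
  linarith [arccos_nonneg (1 / y), show sigmaDenom y = √(y ^ 2 - 1) - arccos (1 / y) from rfl]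

lemma sigmaDenom_pos_of_sigmaF_pos {y : ℝ} (h : 0 < sigmaF y) : 0 < sigmaDenom y := by
  by_contra! hD
  exact (div_nonpos_of_nonneg_of_nonpos pi_pos.le hD).not_gt (sigmaF_eq_pi_div y ▸ h)

lemma pi_lt_mul_of_sigmaF_eq {x y : ℝ} (hx : 0 < x) (hy : 0 < y) (h : sigmaF y = x) :
    π < x * y := by
  have hD := sigmaDenom_pos_of_sigmaF_pos (by rwa [h])
  have hπ : π = x * sigmaDenom y := by
    rw [← h, sigmaF_eq_pi_div, div_mul_cancel₀ _ hD.ne']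
  rw [hπ]
  exact mul_lt_mul_of_pos_left (sigmaDenom_lt_self hy) hx

lemma strictAntiOn_of_sigmaF_eq {f : ℝ → ℝ} (hf : ∀ x : ℝ, 0 < x → 1 < f x ∧ sigmaF (f x) = x) :
    StrictAntiOn f (Ioi 0) := by
  intro x hx y hy hxy
  by_contra! hfxy
  obtain ⟨hx1, hσx⟩ := hf x hx
  obtain ⟨hy1, hσy⟩ := hf y hy
  have hD := strictMonoOn_sigmaDenom.monotoneOn hx1 hy1 hfxy
  have hyx : y ≤ x := by
    rw [← hσx, ← hσy, sigmaF_eq_pi_div, sigmaF_eq_pi_div]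
    exact div_le_div_of_nonneg_left pi_pos.le
      (sigmaDenom_pos_of_sigmaF_pos (by rwa [hσx])) hD
  exact hyx.not_gt hxy

lemma norm_deriv_deriv_gFun_mul_div_sq_le {a x y : ℝ} (ha : 0 < a) (hx : 0 < x) (hy : 0 < y)
    (hxy : π < x * y) (hay : a * y ≠ 1) :
    ‖deriv (deriv gFun) (a * y) / x ^ 2‖ ≤ 32 / (a * π) ^ 2 := by
  have hπ : (a * π) ^ 2 ≤ (x * (a * y)) ^ 2 :=
    pow_le_pow_left₀ (by positivity) (by nlinarith) 2
  rw [norm_div, norm_pow, norm_eq_abs, norm_eq_abs, abs_of_pos hx, div_le_iff₀ (by positivity)]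
  calc |deriv (deriv gFun) (a * y)| ≤ 32 / (a * y) ^ 2 :=
        abs_deriv_deriv_gFun_le (by positivity) hay
    _ ≤ 32 / (a * π) ^ 2 * x ^ 2 := by
        rw [div_mul_eq_mul_div, div_le_div_iff₀ (by positivity) (by positivity)]
        nlinarith

theorem stmt_3_general (a b : ℝ) (ha : 0 < a)
    (f : ℝ → ℝ) (hf : ∀ x : ℝ, 0 < x → 1 < f x ∧ sigmaF (f x) = x) :
    MeasureTheory.IntegrableOn
      (fun x => deriv (deriv gFun) (a * f x) / x^2) (Set.Ioo 0 b) := by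
  have hanti := strictAntiOn_of_sigmaF_eq hf
  have hmeas : AEStronglyMeasurable (fun x ↦ deriv (deriv gFun) (a * f x) / x ^ 2)
      (volume.restrict (Ioo 0 b)) := by
    have hf_meas : AEMeasurable f (volume.restrict (Ioo 0 b)) :=
      aemeasurable_restrict_of_antitoneOn measurableSet_Ioo
        (hanti.antitoneOn.mono Ioo_subset_Ioi_self)
    exact (((measurable_deriv _).comp_aemeasurable (hf_meas.const_mul a)).div
      (measurable_id.pow_const 2).aemeasurable).aestronglyMeasurable
  have h_ne_one : ∀ᵐ x, x ∉ {x | 0 < x ∧ a * f x = 1} :=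
    measure_eq_zero_iff_ae_notMem.1 <| Set.Subsingleton.measure_zero (fun x hx y hy ↦
      hanti.injOn hx.1 hy.1 (mul_left_cancel₀ ha.ne' (hx.2.trans hy.2.symm))) _
  refine IntegrableOn.of_bound measure_Ioo_lt_top hmeas (32 / (a * π) ^ 2) ?_
  rw [ae_restrict_iff' measurableSet_Ioo]
  filter_upwards [h_ne_one] with x hx1 hx
  obtain ⟨hfx, hσ⟩ := hf x hx.1
  exact norm_deriv_deriv_gFun_mul_div_sq_le ha hx.1 (by linarith)
    (pi_lt_mul_of_sigmaF_eq hx.1 (by linarith) hσ) fun h ↦ hx1 ⟨hx.1, h⟩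

theorem stmt_3 (a b : ℝ) (ha : 0 < a) (hb : 0 < b)
    (f : ℝ → ℝ) (hf : ∀ x : ℝ, 0 < x → 1 < f x ∧ sigmaF (f x) = x) :
    MeasureTheory.IntegrableOn
      (fun x => deriv (deriv gFun) (a * f x) / x^2) (Set.Ioo 0 b) :=
  stmt_3_general a b ha f hf
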